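/- arXiv:1005.4609 — 3 statements merged into one kernel-verified Lean document; each statement's English description precedes it below -/
import Mathlib

section
/- Forbidden ball property: let γ be a C¹ closed curve in ℝ³ with thickness Δ[γ] ≥ Θ > 0. If B is an open ball of radius Θ whose boundary sphere is tangent to γ at a point p ∈ γ (i.e., p ∈ ∂B and the tangent line of γ at p is tangent to ∂B at p), then B contains no point of γ. -/
/-!
Suppose `γ t` lies in the ball. The circles through `γ s`, `γ t₀`, `γ t` converge, as `s → t₀`,
to the circle through `γ t` tangent to `γ` at `γ t₀`. That circle lies in a plane through the
tangent line, which meets the ball in a disc of radius at most `Θ` tangent to the same line at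
`γ t₀` and containing `γ t` in its interior; so its radius is `< Θ`. Hence some triple of distinct
points of `γ` (distinct because `γ` is injective on a period) has circumradius `< Θ`.
-/

open Metric Set Real Function MeasureTheory
open scoped RealInnerProductSpace

noncomputable section

abbrev E3 := EuclideanSpace ℝ (Fin 3)

open Classical in
/-- Circumcircle radius of three points in `ℝ³`: `∞` for collinear triples,
otherwise `abc/(4·area)` via Heron's formula. -/
noncomputable def circumradius3 (x y z : E3) : ENNReal :=
  if Collinear ℝ ({x, y, z} : Set E3) then ⊤
  else ENNReal.ofReal (dist x y * dist y z * dist z x /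
    Real.sqrt ((dist x y + dist y z + dist z x) * (-dist x y + dist y z + dist z x) *
      (dist x y - dist y z + dist z x) * (dist x y + dist y z - dist z x)))

/-- Thickness of a set of points (the image of a curve): infimum of circumradii
over all triples of distinct points. -/
noncomputable def thickness (Γ : Set E3) : ENNReal :=
  sInf {r | ∃ x ∈ Γ, ∃ y ∈ Γ, ∃ z ∈ Γ, x ≠ y ∧ y ≠ z ∧ x ≠ z ∧ r = circumradius3 x y z}

open Filter Topology

section Gram

variable {E : Type*} [NormedAddCommGroup E] [InnerProductSpace ℝ E]

def gramDet (u w : E) : ℝ := ‖u‖ ^ 2 * ‖w‖ ^ 2 - ⟪u, w⟫ ^ 2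

lemma gramDet_smul_left (ε : ℝ) (u w : E) : gramDet (ε • u) w = ε ^ 2 * gramDet u w := by
  simp only [gramDet, norm_smul, real_inner_smul_left, Real.norm_eq_abs, mul_pow, sq_abs]
  ring

lemma gramDet_nonneg (u w : E) : 0 ≤ gramDet u w := by
  have := abs_real_inner_le_norm u w
  unfold gramDet
  nlinarith [abs_nonneg ⟪u, w⟫, sq_abs ⟪u, w⟫, norm_nonneg u, norm_nonneg w]

lemma continuous_gramDet_left (w : E) : Continuous fun u : E => gramDet u w := by
  unfold gramDet; fun_prop

lemma gramDet_sub_eq_zero_of_collinear {x y z : E} (h : Collinear ℝ ({x, y, z} : Set E)) :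
    gramDet (x - y) (z - y) = 0 := by
  obtain ⟨d, hd⟩ := (collinear_iff_of_mem (by simp : y ∈ ({x, y, z} : Set E))).1 h
  obtain ⟨r, rfl⟩ := hd x (by simp)
  obtain ⟨r', rfl⟩ := hd z (by simp)
  simp only [vadd_eq_add, add_sub_cancel_right, gramDet_smul_left]
  simp only [gramDet, norm_smul, real_inner_smul_right, real_inner_self_eq_norm_sq,
    Real.norm_eq_abs, mul_pow, sq_abs]
  ring

/-- Bessel's inequality for the orthogonal pair `v, N`, multiplied out. -/
lemma sq_norm_mul_sq_inner_le_gramDet {v N : E} (hvN : ⟪v, N⟫ = 0) (w : E) :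
    ‖v‖ ^ 2 * ⟪N, w⟫ ^ 2 ≤ ‖N‖ ^ 2 * gramDet v w := by
  have hCS := real_inner_mul_inner_self_le v (‖N‖ ^ 2 • w - ⟪N, w⟫ • N)
  simp only [inner_sub_left, inner_sub_right, real_inner_smul_left, real_inner_smul_right,
    real_inner_self_eq_norm_sq, hvN, real_inner_comm N w, norm_smul, Real.norm_eq_abs, mul_pow,
    sq_abs, mul_zero, sub_zero] at hCS
  rcases (norm_nonneg N).eq_or_lt with hN | hN
  · obtain rfl := norm_eq_zero.1 hN.symm
    simp
  · unfold gramDet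
    nlinarith [pow_pos hN 2]

/-- If `w` lies in the open ball of radius `Θ` about `N`, whose boundary sphere passes through `0`
tangentially to `v`, then the circle through `0` and `w` tangent to `v` has radius
`‖v‖ ‖w‖² / (2 √(gramDet v w)) < Θ`. -/
lemma norm_mul_norm_sq_lt_of_norm_sub_lt {v w N : E} {Θ : ℝ} (hv : v ≠ 0) (hN : ‖N‖ = Θ)
    (hvN : ⟪v, N⟫ = 0) (hw : ‖w - N‖ < Θ) :
    ‖v‖ * ‖w‖ ^ 2 < 2 * Θ * √(gramDet v w) := by
  have hΘ : 0 ≤ Θ := hN ▸ norm_nonneg N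
  have hwN : ‖w‖ ^ 2 < 2 * ⟪N, w⟫ := by
    have := norm_sub_sq_real w N
    rw [real_inner_comm]
    nlinarith [norm_nonneg (w - N)]
  have hbessel : (‖v‖ * ⟪N, w⟫) ^ 2 ≤ (Θ * √(gramDet v w)) ^ 2 := by
    rw [mul_pow, mul_pow, Real.sq_sqrt (gramDet_nonneg v w), ← hN]
    exact sq_norm_mul_sq_inner_le_gramDet hvN w
  calc ‖v‖ * ‖w‖ ^ 2 < ‖v‖ * (2 * ⟪N, w⟫) := mul_lt_mul_of_pos_left hwN (norm_pos_iff.2 hv)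
    _ = 2 * (‖v‖ * ⟪N, w⟫) := by ring
    _ ≤ 2 * (Θ * √(gramDet v w)) :=
      mul_le_mul_of_nonneg_left (abs_le_of_sq_le_sq' hbessel (by positivity)).2 zero_le_two
    _ = 2 * Θ * √(gramDet v w) := by ring

lemma heron_product_eq_four_mul_gramDet (x y z : E) :
    (dist x y + dist y z + dist z x) * (-dist x y + dist y z + dist z x) *
      (dist x y - dist y z + dist z x) * (dist x y + dist y z - dist z x) =
      4 * gramDet (x - y) (z - y) := by
  have hcos : dist z x ^ 2 = dist x y ^ 2 + dist y z ^ 2 - 2 * ⟪x - y, z - y⟫ := by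
    rw [dist_eq_norm, dist_eq_norm, dist_comm, dist_eq_norm,
      show z - x = (z - y) - (x - y) by abel, norm_sub_sq_real, real_inner_comm]
    ring
  unfold gramDet
  rw [← dist_eq_norm, ← dist_eq_norm, dist_comm z y]
  linear_combination (2 * dist x y ^ 2 + 2 * dist y z ^ 2 - dist z x ^ 2
    - (dist x y ^ 2 + dist y z ^ 2 - 2 * ⟪x - y, z - y⟫)) * hcos

end Gram

lemma circumradius3_eq_of_gramDet_pos {x y z : E3} (h : 0 < gramDet (x - y) (z - y)) :
    circumradius3 x y z =
      ENNReal.ofReal (dist x y * dist y z * dist z x / (2 * √(gramDet (x - y) (z - y)))) := by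
  have hnc : ¬ Collinear ℝ ({x, y, z} : Set E3) := fun hcol =>
    h.ne' (gramDet_sub_eq_zero_of_collinear hcol)
  rw [circumradius3, if_neg hnc, heron_product_eq_four_mul_gramDet, Real.sqrt_mul zero_le_four,
    show (4 : ℝ) = 2 ^ 2 by norm_num, Real.sqrt_sq zero_le_two]

lemma circumradius3_lt_of_sub_eq_smul {x y z a : E3} {ε Θ : ℝ} (hε : ε ≠ 0)
    (hxy : x - y = ε • a) (h : ‖a‖ * ‖z - y‖ * ‖z - x‖ < 2 * Θ * √(gramDet a (z - y))) :
    circumradius3 x y z < ENNReal.ofReal Θ := by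
  have hpos : 0 < 2 * Θ * √(gramDet a (z - y)) := lt_of_le_of_lt (by positivity) h
  have hsqrt : 0 < √(gramDet a (z - y)) :=
    (Real.sqrt_nonneg _).lt_of_ne fun h0 => by rw [← h0, mul_zero] at hpos; exact hpos.false
  have hΘ : 0 < Θ := by nlinarith
  have hg : 0 < gramDet a (z - y) := Real.sqrt_pos.1 hsqrt
  have hε2 : 0 < ε ^ 2 := by positivity
  have hεabs : 0 < |ε| := abs_pos.2 hε
  rw [circumradius3_eq_of_gramDet_pos (by rw [hxy, gramDet_smul_left]; positivity),
    ENNReal.ofReal_lt_ofReal_iff hΘ, hxy, gramDet_smul_left, Real.sqrt_mul hε2.le,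
    Real.sqrt_sq_eq_abs, dist_eq_norm, hxy, dist_eq_norm, dist_eq_norm, norm_sub_rev y z,
    norm_smul, Real.norm_eq_abs, div_lt_iff₀ (by positivity)]
  nlinarith [mul_lt_mul_of_pos_left h hεabs]

lemma Function.Periodic.eq_of_injOn_Ico {β : Type*} {f : ℝ → β} {p a : ℝ} (hp : 0 < p)
    (hf : Periodic f p) (hinj : InjOn f (Ico a (a + p))) {x y : ℝ} (hxy : |x - y| < p)
    (h : f x = f y) : x = y := by
  have hmod : ∀ u, f (toIcoMod hp a u) = f u := fun u => hf.sub_zsmul_eq _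
  obtain ⟨n, hn⟩ := (toIcoMod_eq_toIcoMod hp).1 <|
    hinj (toIcoMod_mem_Ico hp a x) (toIcoMod_mem_Ico hp a y) (by rw [hmod, hmod, h])
  rw [zsmul_eq_mul] at hn
  rw [abs_sub_comm, hn, abs_mul, abs_of_pos hp] at hxy
  have hn0 : n = 0 := by
    have : |(n : ℝ)| < 1 := by nlinarith
    exact Int.abs_lt_one_iff.1 (by exact_mod_cast this)
  simpa [hn0, sub_eq_zero, eq_comm] using hn

lemma Function.Periodic.eventually_ne_of_injOn_Ico {β : Type*} {f : ℝ → β} {p a : ℝ}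
    (hp : 0 < p) (hf : Periodic f p) (hinj : InjOn f (Ico a (a + p))) (x : ℝ) :
    ∀ᶠ y in 𝓝[≠] x, f y ≠ f x := by
  filter_upwards [nhdsWithin_le_nhds (eventually_abs_sub_lt x hp), self_mem_nhdsWithin]
    with y hy hne using fun h => hne (hf.eq_of_injOn_Ico hp hinj hy h)

lemma thickness_le_circumradius3 {Γ : Set E3} {x y z : E3} (hx : x ∈ Γ) (hy : y ∈ Γ)
    (hz : z ∈ Γ) (hxy : x ≠ y) (hyz : y ≠ z) (hxz : x ≠ z) :
    thickness Γ ≤ circumradius3 x y z :=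
  sInf_le ⟨x, hx, y, hy, z, hz, hxy, hyz, hxz, rfl⟩

lemma eventually_circumradius3_lt {γ : ℝ → E3} {v z : E3} {t₀ Θ : ℝ} (hγ : HasDerivAt γ v t₀)
    (hR : ‖v‖ * ‖z - γ t₀‖ ^ 2 < 2 * Θ * √(gramDet v (z - γ t₀))) :
    ∀ᶠ s in 𝓝[≠] t₀, circumradius3 (γ s) (γ t₀) z < ENNReal.ofReal Θ := by
  have hslope := hγ.tendsto_slope
  have hz : Tendsto (fun s => z - γ s) (𝓝[≠] t₀) (𝓝 (z - γ t₀)) :=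
    tendsto_const_nhds.sub (hγ.continuousAt.tendsto.mono_left nhdsWithin_le_nhds)
  have hlt : ∀ᶠ s in 𝓝[≠] t₀, ‖slope γ t₀ s‖ * ‖z - γ t₀‖ * ‖z - γ s‖ <
      2 * Θ * √(gramDet (slope γ t₀ s) (z - γ t₀)) := by
    refine Tendsto.eventually_lt ((hslope.norm.mul tendsto_const_nhds).mul hz.norm)
      (tendsto_const_nhds.mul ((Real.continuous_sqrt.comp
        (continuous_gramDet_left _)).continuousAt.tendsto.comp hslope)) ?_
    simpa [sq, mul_assoc] using hR
  filter_upwards [hlt, self_mem_nhdsWithin] with s hs hne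
  exact circumradius3_lt_of_sub_eq_smul (sub_ne_zero.2 hne) (sub_smul_slope γ t₀ s).symm hs

theorem forbidden_ball_general (γ : ℝ → E3) (Θ : ℝ)
    (hper : Periodic γ (2 * π)) (hC1 : ContDiff ℝ 1 γ)
    (hreg : ∀ t, deriv γ t ≠ 0)
    (hsimple : InjOn γ (Ico 0 (2 * π)))
    (hthick : ENNReal.ofReal Θ ≤ thickness (range γ))
    (c : E3) (t₀ : ℝ)
    (htouch : dist (γ t₀) c = Θ)
    (htang : ⟪deriv γ t₀, γ t₀ - c⟫ = 0) :
    ∀ t, γ t ∉ Metric.ball c Θ := by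
  intro t ht
  rw [mem_ball] at ht
  have hγ : HasDerivAt γ (deriv γ t₀) t₀ := (hC1.differentiable one_ne_zero t₀).hasDerivAt
  have hne : γ t ≠ γ t₀ := fun h => (h ▸ ht).ne htouch
  have hR : ‖deriv γ t₀‖ * ‖γ t - γ t₀‖ ^ 2 < 2 * Θ * √(gramDet (deriv γ t₀) (γ t - γ t₀)) := by
    refine norm_mul_norm_sq_lt_of_norm_sub_lt (N := c - γ t₀) (hreg t₀) ?_ ?_ ?_
    · rw [← dist_eq_norm, dist_comm, htouch]
    · rw [← neg_sub, inner_neg_right, htang, neg_zero]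
    · rwa [sub_sub_sub_cancel_right, ← dist_eq_norm]
  obtain ⟨s, hs, hst₀, hst⟩ := ((eventually_circumradius3_lt hγ hR).and
    ((hper.eventually_ne_of_injOn_Ico two_pi_pos (by rwa [zero_add]) t₀).and
      ((hγ.continuousAt.tendsto.mono_left nhdsWithin_le_nhds).eventually_ne hne.symm))).exists
  exact (hthick.trans (thickness_le_circumradius3 (mem_range_self s) (mem_range_self t₀)
    (mem_range_self t) hst₀ hne.symm hst)).not_gt hs

theorem forbidden_ball (γ : ℝ → E3) (Θ : ℝ) (hΘ : 0 < Θ)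
    (hper : Periodic γ (2 * π)) (hC1 : ContDiff ℝ 1 γ)
    (hreg : ∀ t, deriv γ t ≠ 0)
    (hsimple : InjOn γ (Ico 0 (2 * π)))
    (hthick : ENNReal.ofReal Θ ≤ thickness (range γ))
    (c : E3) (t₀ : ℝ)
    (htouch : dist (γ t₀) c = Θ)
    (htang : ⟪deriv γ t₀, γ t₀ - c⟫ = 0) :
    ∀ t, γ t ∉ Metric.ball c Θ :=
  forbidden_ball_general γ Θ hper hC1 hreg hsimple hthick c t₀ htouch htang
end
end

section
/- There is no closed C¹ regular curve contained in the unit sphere S² whose thickness Δ[γ] is strictly greater than 1. -/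
open Metric Set Real Function MeasureTheory
open scoped RealInnerProductSpace

noncomputable section

/-- Gram determinant of three unit vectors is nonnegative. -/
lemma gram_nonneg (x y z : E3) (hx : ‖x‖ = 1) (hy : ‖y‖ = 1) (hz : ‖z‖ = 1) :
    0 ≤ 1 - ⟪x,y⟫^2 - ⟪y,z⟫^2 - ⟪x,z⟫^2 + 2 * ⟪x,y⟫ * ⟪y,z⟫ * ⟪x,z⟫ := by
  set u := ⟪x,y⟫ with hu
  set v := ⟪y,z⟫ with hv
  have key := real_inner_mul_inner_self_le (x - u • y) (z - v • y)
  have hxx : ⟪x,x⟫ = 1 := by rw [real_inner_self_eq_norm_sq, hx]; ring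
  have hyy : ⟪y,y⟫ = 1 := by rw [real_inner_self_eq_norm_sq, hy]; ring
  have hzz : ⟪z,z⟫ = 1 := by rw [real_inner_self_eq_norm_sq, hz]; ring
  have hyx : ⟪y,x⟫ = u := (real_inner_comm x y)
  have hzy : ⟪z,y⟫ = v := (real_inner_comm y z)
  have e1 : ⟪x - u • y, z - v • y⟫ = ⟪x,z⟫ - u * v := by
    simp only [inner_sub_left, inner_sub_right, real_inner_smul_left, real_inner_smul_right,
      hyy, hyx, hzy, ← hu, ← hv]
    ring
  have e2 : ⟪x - u • y, x - u • y⟫ = 1 - u^2 := by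
    simp only [inner_sub_left, inner_sub_right, real_inner_smul_left, real_inner_smul_right,
      hyy, hxx, hyx, ← hu]
    ring
  have e3 : ⟪z - v • y, z - v • y⟫ = 1 - v^2 := by
    simp only [inner_sub_left, inner_sub_right, real_inner_smul_left, real_inner_smul_right,
      hyy, hzz, hzy, ← hv]
    ring
  rw [e1, e2, e3] at key
  nlinarith [key]

/-- Three distinct points on the unit sphere are never collinear. -/
lemma not_collinear_sphere {x y z : E3} (hx : ‖x‖ = 1) (hy : ‖y‖ = 1) (hz : ‖z‖ = 1)
    (hxy : x ≠ y) (hyz : y ≠ z) (hxz : x ≠ z) :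
    ¬ Collinear ℝ ({x, y, z} : Set E3) := by
  intro h
  rw [collinear_iff_exists_forall_eq_smul_vadd] at h
  obtain ⟨p, v, hv⟩ := h
  obtain ⟨a, ha⟩ := hv x (by simp)
  obtain ⟨b, hb⟩ := hv y (by simp)
  obtain ⟨c, hc⟩ := hv z (by simp)
  have hvne : v ≠ 0 := by
    rintro rfl
    simp only [smul_zero] at ha hb
    exact hxy (ha.trans hb.symm)
  have hVpos : 0 < ⟪v,v⟫ := by
    rw [real_inner_self_eq_norm_sq]
    exact pow_pos (norm_pos_iff.mpr hvne) 2
  have q : ∀ (t : ℝ), ‖t • v +ᵥ p‖ = 1 → t^2 * ⟪v,v⟫ + 2 * t * ⟪v,p⟫ + ⟪p,p⟫ = 1 := by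
    intro t ht
    have ht' : ‖t • v + p‖ = 1 := ht
    have h1 : ⟪t • v + p, t • v + p⟫ = 1 := by
      rw [real_inner_self_eq_norm_sq, ht']; ring
    rw [inner_add_add_self] at h1
    simp only [real_inner_smul_left, real_inner_smul_right] at h1
    linear_combination h1 - t * real_inner_comm v p
  have qa := q a (by rw [← ha]; exact hx)
  have qb := q b (by rw [← hb]; exact hy)
  have qc := q c (by rw [← hc]; exact hz)
  have hab : a ≠ b := by rintro rfl; exact hxy (ha.trans hb.symm)
  have hbc : b ≠ c := by rintro rfl; exact hyz (hb.trans hc.symm)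
  have hac : a ≠ c := by rintro rfl; exact hxz (ha.trans hc.symm)
  have h1 : (a - b) * ((a + b) * ⟪v,v⟫ + 2 * ⟪v,p⟫) = 0 := by nlinarith [qa, qb]
  have h2 : (a - c) * ((a + c) * ⟪v,v⟫ + 2 * ⟪v,p⟫) = 0 := by nlinarith [qa, qc]
  have h1' : (a + b) * ⟪v,v⟫ + 2 * ⟪v,p⟫ = 0 :=
    (mul_eq_zero.mp h1).resolve_left (sub_ne_zero.mpr hab)
  have h2' : (a + c) * ⟪v,v⟫ + 2 * ⟪v,p⟫ = 0 :=
    (mul_eq_zero.mp h2).resolve_left (sub_ne_zero.mpr hac)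
  have hbc' : b = c := by
    have h3 : (b - c) * ⟪v,v⟫ = 0 := by linarith
    have h4 := (mul_eq_zero.mp h3).resolve_right (ne_of_gt hVpos)
    linarith [sub_eq_zero.mp h4]
  exact hbc hbc'

/-- Any three distinct points on the unit sphere have circumradius at most 1. -/
lemma circumradius3_le_one {x y z : E3} (hx : ‖x‖ = 1) (hy : ‖y‖ = 1) (hz : ‖z‖ = 1)
    (hxy : x ≠ y) (hyz : y ≠ z) (hxz : x ≠ z) :
    circumradius3 x y z ≤ 1 := by
  rw [circumradius3, if_neg (not_collinear_sphere hx hy hz hxy hyz hxz)]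
  set a := dist x y with ha
  set b := dist y z with hb
  set c := dist z x with hc
  have ha2 : a^2 = 2 - 2 * ⟪x,y⟫ := by
    rw [ha, dist_eq_norm, norm_sub_sq_real, hx, hy]; ring
  have hb2 : b^2 = 2 - 2 * ⟪y,z⟫ := by
    rw [hb, dist_eq_norm, norm_sub_sq_real, hy, hz]; ring
  have hc2 : c^2 = 2 - 2 * ⟪z,x⟫ := by
    rw [hc, dist_eq_norm, norm_sub_sq_real, hz, hx]; ring
  have hzx : ⟪z,x⟫ = ⟪x,z⟫ := real_inner_comm x z
  have gram := gram_nonneg x y z hx hy hz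
  have ha4 : a^4 = (2 - 2 * ⟪x,y⟫)^2 := by rw [show a^4 = (a^2)^2 by ring, ha2]
  have hb4 : b^4 = (2 - 2 * ⟪y,z⟫)^2 := by rw [show b^4 = (b^2)^2 by ring, hb2]
  have hc4 : c^4 = (2 - 2 * ⟪x,z⟫)^2 := by
    rw [show c^4 = (c^2)^2 by ring, hc2, hzx]
  have hab' : a^2 * b^2 = (2 - 2 * ⟪x,y⟫) * (2 - 2 * ⟪y,z⟫) := by rw [ha2, hb2]
  have hbc' : b^2 * c^2 = (2 - 2 * ⟪y,z⟫) * (2 - 2 * ⟪x,z⟫) := by rw [hb2, hc2, hzx]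
  have hca' : c^2 * a^2 = (2 - 2 * ⟪x,z⟫) * (2 - 2 * ⟪x,y⟫) := by rw [hc2, ha2, hzx]
  have habc' : a^2 * b^2 * c^2 =
      (2 - 2 * ⟪x,y⟫) * (2 - 2 * ⟪y,z⟫) * (2 - 2 * ⟪x,z⟫) := by rw [ha2, hb2, hc2, hzx]
  have key : (a * b * c)^2 ≤ (a + b + c) * (-a + b + c) * (a - b + c) * (a + b - c) := by
    nlinarith [gram, ha4, hb4, hc4, hab', hbc', hca', habc']
  have habc : 0 ≤ a * b * c := by positivity
  have hsq : a * b * c ≤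
      Real.sqrt ((a + b + c) * (-a + b + c) * (a - b + c) * (a + b - c)) := by
    have := Real.sqrt_le_sqrt key
    rwa [Real.sqrt_sq habc] at this
  have hdiv : a * b * c /
      Real.sqrt ((a + b + c) * (-a + b + c) * (a - b + c) * (a + b - c)) ≤ 1 := by
    rcases eq_or_lt_of_le (Real.sqrt_nonneg
        ((a + b + c) * (-a + b + c) * (a - b + c) * (a + b - c))) with h0 | h0
    · rw [← h0]; simp
    · exact (div_le_one h0).mpr hsq
  exact ENNReal.ofReal_le_one.mpr hdiv

theorem no_spherical_curve_of_thickness_gt_one :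
    ¬ ∃ γ : ℝ → E3, Periodic γ (2 * π) ∧ ContDiff ℝ 1 γ ∧ (∀ t, deriv γ t ≠ 0) ∧
      range γ ⊆ sphere (0 : E3) 1 ∧ 1 < thickness (range γ) := by
  rintro ⟨γ, _hper, hC1, hderiv, hsph, hthick⟩
  -- the curve is nonconstant
  have hnt : (range γ).Nontrivial := by
    by_contra h
    rw [Set.not_nontrivial_iff] at h
    have hconst : γ = fun _ => γ 0 :=
      funext fun t => h (mem_range_self t) (mem_range_self 0)
    have : deriv γ 0 = 0 := by rw [hconst]; simp
    exact hderiv 0 this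
  have hinf : (range γ).Infinite :=
    (isPreconnected_range hC1.continuous).infinite_of_nontrivial hnt
  -- pick three distinct points of the curve
  obtain ⟨x, hxmem⟩ := hinf.nonempty
  obtain ⟨y, hy⟩ := (hinf.diff (Set.finite_singleton x)).nonempty
  obtain ⟨z, hz⟩ := (hinf.diff ((Set.finite_singleton y).insert x)).nonempty
  have hymem : y ∈ range γ := hy.1
  have hzmem : z ∈ range γ := hz.1
  have hxy : x ≠ y := fun h => hy.2 (by simp [← h])
  have hxz : x ≠ z := fun h => hz.2 (by simp [← h])
  have hyz : y ≠ z := fun h => hz.2 (by simp [← h])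
  have hnx : ‖x‖ = 1 := by simpa using mem_sphere_zero_iff_norm.mp (hsph hxmem)
  have hny : ‖y‖ = 1 := by simpa using mem_sphere_zero_iff_norm.mp (hsph hymem)
  have hnz : ‖z‖ = 1 := by simpa using mem_sphere_zero_iff_norm.mp (hsph hzmem)
  have hmem : circumradius3 x y z ∈
      {r | ∃ x ∈ range γ, ∃ y ∈ range γ, ∃ z ∈ range γ,
        x ≠ y ∧ y ≠ z ∧ x ≠ z ∧ r = circumradius3 x y z} :=
    ⟨x, hxmem, y, hymem, z, hzmem, hxy, hyz, hxz, rfl⟩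
  have hle : thickness (range γ) ≤ circumradius3 x y z := sInf_le hmem
  exact absurd hthick (not_lt.mpr
    (hle.trans (circumradius3_le_one hnx hny hnz hxy hyz hxz)))
end
end

section
/- If γ is a closed C¹ regular curve on S² with thickness Δ[γ] = 1, then the image of γ is a great circle of S². -/
open Metric Set Real Function MeasureTheory
open scoped RealInnerProductSpace

noncomputable section

/-!
On the unit sphere, the Heron expression `H = 16 · area²` of a triangle `x y z` equals
`(|xy| |yz| |zx|)² + 4 det G(x, y, z)`, where `G` is the Gram matrix. Hence a circumradius
`|xy| |yz| |zx| / √H ≥ 1` forces `det G ≤ 0`, i.e. `det G = 0`: the three points are coplanar with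
the origin. Thickness `1` therefore puts the whole curve on the great circle spanned by two of its
points. If the curve missed a point `q` of that circle, stereographic projection from `q` would
turn it into a continuous periodic real function injective on a period, which cannot exist.
-/

open Matrix Module Submodule

lemma Function.Periodic.not_injOn_Ico {f : ℝ → ℝ} {T : ℝ} (hper : Periodic f T)
    (hf : Continuous f) (hT : 0 < T) : ¬ InjOn f (Ico 0 T) := by
  intro hinj
  -- a zero of `g` gives two points of one period, half a period apart, where `f` agrees
  set g : ℝ → ℝ := fun t => f (t + T / 2) - f t
  have hg : g (T / 2) = -g 0 := by
    simp only [g, add_halves, zero_add, hper.eq]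
    ring
  obtain ⟨s, hs, hgs⟩ : ∃ s ∈ Icc 0 (T / 2), g s = 0 := by
    have h0 : (0 : ℝ) ∈ uIcc (g 0) (g (T / 2)) := by
      rw [hg, mem_uIcc]
      rcases le_total 0 (g 0) with h | h
      · exact Or.inr ⟨by linarith, h⟩
      · exact Or.inl ⟨h, by linarith⟩
    obtain ⟨s, hs, hgs⟩ := intermediate_value_uIcc (by fun_prop) h0
    exact ⟨s, by rwa [uIcc_of_le (by linarith)] at hs, hgs⟩
  rcases hs.2.lt_or_eq with hlt | rfl
  · have := hinj ⟨hs.1, by linarith⟩ ⟨by linarith [hs.1], by linarith⟩ (sub_eq_zero.mp hgs).symm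
    linarith
  · have h0 : g 0 = 0 := by simpa [hgs] using hg.symm
    replace h0 : f (T / 2) = f 0 := by simpa [g, sub_eq_zero] using h0
    have := hinj ⟨by linarith, by linarith⟩ ⟨le_rfl, hT⟩ h0
    linarith

lemma eq_of_div_one_sub_eq_of_sq_add_sq_eq_one {c₁ s₁ c₂ s₂ : ℝ} (h₁ : c₁ ^ 2 + s₁ ^ 2 = 1)
    (h₂ : c₂ ^ 2 + s₂ ^ 2 = 1) (hc₁ : c₁ ≠ 1) (hc₂ : c₂ ≠ 1)
    (h : s₁ / (1 - c₁) = s₂ / (1 - c₂)) : c₁ = c₂ ∧ s₁ = s₂ := by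
  have d₁ : 1 - c₁ ≠ 0 := sub_ne_zero.mpr hc₁.symm
  have d₂ : 1 - c₂ ≠ 0 := sub_ne_zero.mpr hc₂.symm
  rw [div_eq_div_iff d₁ d₂] at h
  have hc : (1 - c₁) * (1 - c₂) * (c₁ - c₂) = 0 := by
    linear_combination (1 / 2 : ℝ) * ((s₁ * (1 - c₂) + s₂ * (1 - c₁)) * h
      - (1 - c₂) ^ 2 * h₁ + (1 - c₁) ^ 2 * h₂)
  have hcc : c₁ = c₂ := sub_eq_zero.mp ((mul_eq_zero.mp hc).resolve_left (mul_ne_zero d₁ d₂))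
  subst hcc
  exact ⟨rfl, mul_right_cancel₀ d₁ h⟩

lemma finrank_span_pair_eq_two {K V : Type*} [DivisionRing K] [AddCommGroup V] [Module K V]
    {x y : V} (h : LinearIndependent K ![x, y]) : finrank K (span K {x, y}) = 2 := by
  rw [← range_cons_cons_empty x y ![], finrank_span_eq_card h, Fintype.card_fin]

section
variable {F : Type*} [NormedAddCommGroup F] [InnerProductSpace ℝ F]

lemma linearIndependent_pair_of_norm_eq_one {x y : F} (hx : ‖x‖ = 1) (hy : ‖y‖ = 1)
    (hxy : x ≠ y) (hxy' : x ≠ -y) : LinearIndependent ℝ ![x, y] := by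
  rw [LinearIndependent.pair_iff' (norm_ne_zero_iff.mp (by simp [hx]))]
  intro a ha
  have : |a| = 1 := by simpa [norm_smul, hx, hy] using congrArg norm ha
  rcases (abs_eq zero_le_one).mp this with rfl | rfl
  · exact hxy (by simpa using ha)
  · exact hxy' (by rw [← ha, neg_one_smul, neg_neg])

lemma exists_linearIndependent_pair_of_subset_sphere {Γ : Set F} (hΓ : Γ ⊆ sphere 0 1)
    {a b c : F} (ha : a ∈ Γ) (hb : b ∈ Γ) (hc : c ∈ Γ) (hab : a ≠ b) (hbc : b ≠ c) (hac : a ≠ c) :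
    ∃ x ∈ Γ, ∃ y ∈ Γ, LinearIndependent ℝ ![x, y] := by
  have hnorm : ∀ p ∈ Γ, ‖p‖ = 1 := fun p hp => mem_sphere_zero_iff_norm.mp (hΓ hp)
  by_cases hab' : a = -b
  · refine ⟨a, ha, c, hc, linearIndependent_pair_of_norm_eq_one (hnorm a ha) (hnorm c hc) hac ?_⟩
    rintro rfl
    exact hbc (neg_injective hab'.symm)
  · exact ⟨a, ha, b, hb, linearIndependent_pair_of_norm_eq_one (hnorm a ha) (hnorm b hb) hab hab'⟩

lemma heron_eq_sq_add_det_gram {x y z : F} (hx : ‖x‖ = 1) (hy : ‖y‖ = 1) (hz : ‖z‖ = 1) :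
    (dist x y + dist y z + dist z x) * (-dist x y + dist y z + dist z x) *
      (dist x y - dist y z + dist z x) * (dist x y + dist y z - dist z x) =
    (dist x y * dist y z * dist z x) ^ 2 + 4 * (gram ℝ ![x, y, z]).det := by
  have hdist : ∀ {p q : F}, ‖p‖ = 1 → ‖q‖ = 1 → dist p q ^ 2 = 2 - 2 * ⟪p, q⟫ := by
    intro p q hp hq
    rw [dist_eq_norm, norm_sub_sq_real, hp, hq]
    ring
  have heron : ∀ a b c : ℝ, (a + b + c) * (-a + b + c) * (a - b + c) * (a + b - c) =
      2 * a ^ 2 * b ^ 2 + 2 * b ^ 2 * c ^ 2 + 2 * c ^ 2 * a ^ 2 - (a ^ 2) ^ 2 - (b ^ 2) ^ 2 -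
        (c ^ 2) ^ 2 := by
    intros; ring
  rw [heron, mul_pow, mul_pow, hdist hx hy, hdist hy hz, hdist hz hx, det_fin_three]
  simp only [gram_apply, cons_val_zero, cons_val_one, cons_val, real_inner_self_eq_norm_sq, hx,
    hy, hz, real_inner_comm x, real_inner_comm y z]
  ring

lemma mem_span_pair_of_det_gram_nonpos {x y z : F} (hyz : LinearIndependent ℝ ![y, z])
    (h : (gram ℝ ![x, y, z]).det ≤ 0) : x ∈ span ℝ {y, z} := by
  have hdet : (gram ℝ ![x, y, z]).det = 0 := le_antisymm h (posSemidef_gram ℝ _).det_nonneg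
  by_contra hx
  refine det_gram_ne_zero_iff_linearIndependent.mpr ?_ hdet
  exact linearIndependent_finCons.mpr ⟨hyz, by rwa [range_cons_cons_empty]⟩

lemma eq_inner_smul_add_inner_smul_of_mem_span_pair {q e p : F} (hq : ‖q‖ = 1) (he : ‖e‖ = 1)
    (hqe : ⟪q, e⟫ = 0) (hp : p ∈ span ℝ {q, e}) : p = ⟪q, p⟫ • q + ⟪e, p⟫ • e := by
  obtain ⟨a, b, rfl⟩ := mem_span_pair.mp hp
  simp [inner_add_right, real_inner_smul_right, hq, he, hqe, real_inner_comm q e]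

lemma injOn_stereographic {q e : F} (hq : ‖q‖ = 1) (he : ‖e‖ = 1) (hqe : ⟪q, e⟫ = 0) :
    InjOn (fun p => ⟪e, p⟫ / (1 - ⟪q, p⟫)) ((sphere 0 1 ∩ span ℝ {q, e}) \ {q}) := by
  have hcoord : ∀ p ∈ (sphere (0 : F) 1 ∩ span ℝ {q, e}) \ {q}, p = ⟪q, p⟫ • q + ⟪e, p⟫ • e ∧
      ⟪q, p⟫ ^ 2 + ⟪e, p⟫ ^ 2 = 1 ∧ ⟪q, p⟫ ≠ 1 := by
    rintro p ⟨⟨hp, hpspan⟩, hpq⟩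
    rw [mem_sphere_zero_iff_norm] at hp
    have hrepr := eq_inner_smul_add_inner_smul_of_mem_span_pair hq he hqe hpspan
    refine ⟨hrepr, ?_, fun h => hpq ((inner_eq_one_iff_of_norm_eq_one hq hp).mp h).symm⟩
    have := congrArg (fun v => ‖v‖ ^ 2) hrepr
    simp only [hp] at this
    rw [norm_add_sq_real, real_inner_smul_left, real_inner_smul_right, hqe, norm_smul,
      norm_smul, hq, he] at this
    simp only [Real.norm_eq_abs, mul_one, sq_abs, mul_zero, add_zero] at this
    linarith
  intro p₁ hp₁ p₂ hp₂ h
  obtain ⟨hrepr₁, hcirc₁, hc₁⟩ := hcoord p₁ hp₁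
  obtain ⟨hrepr₂, hcirc₂, hc₂⟩ := hcoord p₂ hp₂
  obtain ⟨hc, hs⟩ := eq_of_div_one_sub_eq_of_sq_add_sq_eq_one hcirc₁ hcirc₂ hc₁ hc₂ h
  rw [hrepr₁, hrepr₂, hc, hs]

lemma exists_norm_eq_one_inner_eq_zero_span_pair_eq {P : Submodule ℝ F}
    (hP : finrank ℝ P = 2) {q : F} (hqP : q ∈ P) (hq : ‖q‖ = 1) :
    ∃ e, ‖e‖ = 1 ∧ ⟪q, e⟫ = 0 ∧ span ℝ {q, e} = P := by
  have : FiniteDimensional ℝ P := Module.finite_of_finrank_eq_succ hP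
  have hq0 : q ≠ 0 := norm_ne_zero_iff.mp (by simp [hq])
  have hline : finrank ℝ ((ℝ ∙ q)ᗮ ⊓ P : Submodule ℝ F) = 1 :=
    finrank_add_inf_finrank_orthogonal' ((span_singleton_le_iff_mem q P).mpr hqP)
      (by rw [finrank_span_singleton hq0, hP])
  obtain ⟨w, hw, hw0⟩ := ((ℝ ∙ q)ᗮ ⊓ P).exists_mem_ne_zero_of_ne_bot fun h => by
    rw [h, finrank_bot] at hline
    exact zero_ne_one hline
  have he : ‖‖w‖⁻¹ • w‖ = 1 := norm_smul_inv_norm hw0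
  have hqe : ⟪q, ‖w‖⁻¹ • w⟫ = 0 := by
    rw [real_inner_smul_right, mem_orthogonal_singleton_iff_inner_right.mp hw.1, mul_zero]
  have hON : Orthonormal ℝ ![q, ‖w‖⁻¹ • w] := by simp [hq, he, hqe]
  refine ⟨_, he, hqe, eq_of_le_of_finrank_eq ?_ ?_⟩
  · exact span_le.mpr (insert_subset hqP (singleton_subset_iff.mpr (P.smul_mem _ hw.2)))
  · rw [hP, finrank_span_pair_eq_two hON.linearIndependent]

lemma sphere_inter_subset_range_of_injOn {P : Submodule ℝ F} (hP : finrank ℝ P = 2)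
    {γ : ℝ → F} {T : ℝ} (hT : 0 < T) (hγ : Continuous γ) (hper : Periodic γ T)
    (hinj : InjOn γ (Ico 0 T)) (hrange : range γ ⊆ sphere 0 1 ∩ P) :
    sphere 0 1 ∩ (P : Set F) ⊆ range γ := by
  rintro q ⟨hq, hqP⟩
  by_contra hqγ
  rw [mem_sphere_zero_iff_norm] at hq
  obtain ⟨e, he, hqe, hspan⟩ := exists_norm_eq_one_inner_eq_zero_span_pair_eq hP hqP hq
  rw [← hspan] at hrange
  have hmaps : MapsTo γ (Ico 0 T) ((sphere 0 1 ∩ span ℝ {q, e}) \ {q}) :=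
    fun t _ => ⟨hrange ⟨t, rfl⟩, fun h => hqγ ⟨t, h⟩⟩
  have hden : ∀ t, 1 - ⟪q, γ t⟫ ≠ 0 := fun t h => hqγ ⟨t, by
    have hγt := mem_sphere_zero_iff_norm.mp (hrange ⟨t, rfl⟩).1
    exact ((inner_eq_one_iff_of_norm_eq_one hq hγt).mp (sub_eq_zero.mp h).symm).symm⟩
  refine Periodic.not_injOn_Ico (f := fun t => ⟪e, γ t⟫ / (1 - ⟪q, γ t⟫)) (fun t => ?_)
    ((by fun_prop : Continuous _).div (by fun_prop) hden) hT
    ((injOn_stereographic hq he hqe).comp hinj hmaps)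
  simp only [hper t]

lemma exists_ne_zero_orthogonal_span_singleton_eq [FiniteDimensional ℝ F]
    {K : Submodule ℝ F} {n : ℕ}
    (hE : finrank ℝ F = n + 1) (hK : finrank ℝ K = n) : ∃ v ≠ 0, (ℝ ∙ v)ᗮ = K := by
  have hline : finrank ℝ Kᗮ = 1 := finrank_add_finrank_orthogonal' (by rw [hK, hE])
  obtain ⟨v, hv, hv0⟩ := Kᗮ.exists_mem_ne_zero_of_ne_bot fun h => by
    rw [h, finrank_bot] at hline
    exact zero_ne_one hline
  have hKperp : ℝ ∙ v = Kᗮ := eq_of_le_of_finrank_eq ((span_singleton_le_iff_mem v _).mpr hv)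
    (by rw [finrank_span_singleton hv0, hline])
  exact ⟨v, hv0, by rw [hKperp, orthogonal_orthogonal]⟩

end

lemma det_gram_nonpos_of_one_le_circumradius3 {x y z : E3} (hx : ‖x‖ = 1) (hy : ‖y‖ = 1)
    (hz : ‖z‖ = 1) (hxy : x ≠ y) (hyz : y ≠ z) (hxz : x ≠ z) (h : 1 ≤ circumradius3 x y z) :
    (gram ℝ ![x, y, z]).det ≤ 0 := by
  have hcosph : EuclideanGeometry.Cospherical ({x, y, z} : Set E3) :=
    ⟨0, 1, by simp [hx, hy, hz]⟩
  have hncol : ¬ Collinear ℝ ({x, y, z} : Set E3) :=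
    affineIndependent_iff_not_collinear_set.mp (hcosph.affineIndependent_of_ne hxy hxz hyz)
  rw [circumradius3, if_neg hncol, ENNReal.one_le_ofReal, heron_eq_sq_add_det_gram hx hy hz] at h
  set d := (gram ℝ ![x, y, z]).det
  set m := dist x y * dist y z * dist z x
  have hsqrt : 0 < √(m ^ 2 + 4 * d) := by
    by_contra h0
    rw [le_antisymm (not_lt.mp h0) (sqrt_nonneg _), div_zero] at h
    linarith
  have : √(m ^ 2 + 4 * d) ≤ √(m ^ 2) := by
    rw [sqrt_sq (by positivity)]
    exact (one_le_div hsqrt).mp h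
  have := (sqrt_le_sqrt_iff (sq_nonneg m)).mp this
  linarith

lemma subset_span_pair_of_one_le_thickness {Γ : Set E3} (hΓ : Γ ⊆ sphere 0 1)
    (hthick : 1 ≤ thickness Γ) {x y : E3} (hx : x ∈ Γ) (hy : y ∈ Γ)
    (hxy : LinearIndependent ℝ ![x, y]) : Γ ⊆ span ℝ {x, y} := by
  intro z hz
  by_cases hzx : z = x
  · rw [hzx]
    exact subset_span (mem_insert x _)
  by_cases hzy : z = y
  · rw [hzy]
    exact subset_span (mem_insert_of_mem x rfl)
  have hnorm : ∀ p ∈ Γ, ‖p‖ = 1 := fun p hp => mem_sphere_zero_iff_norm.mp (hΓ hp)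
  have hxy' : x ≠ y := hxy.injective.ne (by decide : (0 : Fin 2) ≠ 1)
  refine mem_span_pair_of_det_gram_nonpos hxy
    (det_gram_nonpos_of_one_le_circumradius3 (hnorm z hz) (hnorm x hx) (hnorm y hy) hzx hxy' hzy ?_)
  exact hthick.trans (sInf_le ⟨z, hz, x, hx, y, hy, hzx, hxy', hzy, rfl⟩)

theorem thickness_one_curve_is_great_circle_general (γ : ℝ → E3)
    (hper : Periodic γ (2 * π)) (hC1 : ContDiff ℝ 1 γ)
    (hsimple : InjOn γ (Ico 0 (2 * π)))
    (hsphere : range γ ⊆ sphere (0 : E3) 1)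
    (hthick : thickness (range γ) = 1) :
    ∃ v : E3, v ≠ 0 ∧ range γ = {x ∈ sphere (0 : E3) 1 | ⟪v, x⟫ = 0} := by
  have hne : ∀ s ∈ Icc 0 π, ∀ t ∈ Icc 0 π, s ≠ t → γ s ≠ γ t := fun s hs t ht =>
    hsimple.ne ⟨hs.1, by linarith [hs.2, pi_pos]⟩ ⟨ht.1, by linarith [ht.2, pi_pos]⟩
  have h0 : (0 : ℝ) ∈ Icc 0 π := ⟨le_rfl, pi_pos.le⟩
  have h1 : π / 2 ∈ Icc 0 π := ⟨by positivity, by linarith [pi_pos]⟩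
  have h2 : π ∈ Icc 0 π := ⟨pi_pos.le, le_rfl⟩
  obtain ⟨x, hx, y, hy, hxy⟩ := exists_linearIndependent_pair_of_subset_sphere hsphere
    (mem_range_self 0) (mem_range_self (π / 2)) (mem_range_self π)
    (hne 0 h0 _ h1 (by linarith [pi_pos])) (hne _ h1 π h2 (by linarith [pi_pos]))
    (hne 0 h0 π h2 pi_pos.ne)
  have hK : finrank ℝ (span ℝ {x, y}) = 2 := finrank_span_pair_eq_two hxy
  obtain ⟨v, hv0, hvK⟩ := exists_ne_zero_orthogonal_span_singleton_eq
    (by rw [finrank_euclideanSpace_fin]) hK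
  have hplane : {p ∈ sphere (0 : E3) 1 | ⟪v, p⟫ = 0} = sphere 0 1 ∩ span ℝ {x, y} := by
    ext p
    rw [← hvK]
    simp [mem_orthogonal_singleton_iff_inner_right]
  have hrange : range γ ⊆ sphere 0 1 ∩ span ℝ {x, y} := subset_inter hsphere
    (subset_span_pair_of_one_le_thickness hsphere hthick.ge hx hy hxy)
  refine ⟨v, hv0, hplane ▸ hrange.antisymm ?_⟩
  exact sphere_inter_subset_range_of_injOn hK (by positivity) hC1.continuous hper hsimple hrange

theorem thickness_one_curve_is_great_circle (γ : ℝ → E3)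
    (hper : Periodic γ (2 * π)) (hC1 : ContDiff ℝ 1 γ)
    (hreg : ∀ t, deriv γ t ≠ 0)
    (hsimple : InjOn γ (Ico 0 (2 * π)))
    (hsphere : range γ ⊆ sphere (0 : E3) 1)
    (hthick : thickness (range γ) = 1) :
    ∃ v : E3, v ≠ 0 ∧ range γ = {x ∈ sphere (0 : E3) 1 | ⟪v, x⟫ = 0} :=
  thickness_one_curve_is_great_circle_general γ hper hC1 hsimple hsphere hthick
end
end
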